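/- (Theorem 6.6) Let ξ = exp(iπ/5) ∈ ℂ. If (n₀, …, n₉) ∈ ℕ¹⁰ satisfies Σ_{j=0}^{9} n_j ≥ 3 and Σ_{j=0}^{9} n_j ξ^j ∈ ℝ, then there exists (m₀, …, m₉) ∈ ℕ¹⁰ with m_j ≤ n_j for all j, 0 < Σ_j m_j < Σ_j n_j, and Σ_{j=0}^{9} m_j ξ^j ∈ ℝ. That is, there is no nontrivial real combination of 10th roots of unity on any level n ≥ 3. -/

import Mathlib

/-!
The imaginary part of `∑ m j * ξ ^ j` is `A * sin (π / 5) + B * sin (2 * π / 5)` with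
`A = m₁ + m₄ - m₆ - m₉` and `B = m₂ + m₃ - m₇ - m₈`. Since `sin (2 * π / 5) = τ * sin (π / 5)` and `τ`
is irrational, the sum is real exactly when `A = B = 0`. For such an `n`, one copy of the real root
`ξ⁰` or `ξ⁵` is a real subcombination if `n` contains it; otherwise `A = 0` (or `B = 0`) pairs a
root `ξ ^ a`, `a ∈ {1, 4}`, of `n` with a root `ξ ^ b`, `b ∈ {6, 9}` (resp. `{2, 3}` with `{7, 8}`),
and `ξ ^ a + ξ ^ b` is real. Both subcombinations have at most two terms, while `n` has at least three.
-/

/-- ξ = exp(iπ/5), a primitive 10th root of unity. -/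
noncomputable def xi : ℂ := Complex.exp (Real.pi * Complex.I / 5)

open Real Finset goldenRatio

theorem Irrational.eq_zero_of_intCast_add_intCast_mul {x : ℝ} (hx : Irrational x) {a b : ℤ}
    (h : a + b * x = 0) : a = 0 ∧ b = 0 := by
  obtain rfl : b = 0 := by
    by_contra hb
    exact ((hx.intCast_mul hb).intCast_add a).ne_zero h
  exact ⟨by simpa using h, rfl⟩

theorem sin_two_pi_div_five : sin (2 * π / 5) = φ * sin (π / 5) := by
  rw [mul_div_assoc, sin_two_mul, cos_pi_div_five, goldenRatio]
  ring

theorem eq_zero_of_intCast_mul_sin_pi_div_five_add {a b : ℤ}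
    (h : a * sin (π / 5) + b * sin (2 * π / 5) = 0) : a = 0 ∧ b = 0 := by
  have hsin : sin (π / 5) ≠ 0 :=
    (sin_pos_of_pos_of_lt_pi (by positivity) (by linarith [pi_pos])).ne'
  refine goldenRatio_irrational.eq_zero_of_intCast_add_intCast_mul ?_
  rw [sin_two_pi_div_five] at h
  exact (mul_eq_zero.1 (by linear_combination h : sin (π / 5) * (a + b * φ) = 0)).resolve_left hsin

theorem im_xi_pow (j : ℕ) : (xi ^ j).im = sin (j * π / 5) := by
  rw [xi, ← Complex.exp_nat_mul, ← Complex.exp_ofReal_mul_I_im]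
  congr 2
  push_cast
  ring

theorem im_sum_xi_pow (m : Fin 10 → ℕ) :
    (∑ j, (m j : ℂ) * xi ^ (j : ℕ)).im =
      ((m 1 : ℝ) + m 4 - m 6 - m 9) * sin (π / 5) +
        ((m 2 : ℝ) + m 3 - m 7 - m 8) * sin (2 * π / 5) := by
  have h3 : sin (3 * π / 5) = sin (2 * π / 5) := by rw [← sin_pi_sub]; ring_nf
  have h4 : sin (4 * π / 5) = sin (π / 5) := by rw [← sin_pi_sub]; ring_nf
  have h6 : sin (6 * π / 5) = -sin (π / 5) := by rw [← sin_add_pi]; ring_nf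
  have h7 : sin (7 * π / 5) = -sin (2 * π / 5) := by rw [← sin_add_pi]; ring_nf
  have h8 : sin (8 * π / 5) = -sin (2 * π / 5) := by rw [← sin_two_pi_sub]; ring_nf
  have h9 : sin (9 * π / 5) = -sin (π / 5) := by rw [← sin_two_pi_sub]; ring_nf
  rw [Complex.im_sum]
  simp only [Fin.sum_univ_castSucc, Fin.sum_univ_zero, Fin.reduceCastSucc, Fin.reduceLast,
    Complex.mul_im, Complex.natCast_re, Complex.natCast_im, zero_mul, add_zero, im_xi_pow]
  norm_num [h3, h4, h6, h7, h8, h9]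
  ring

def IsBalanced (m : Fin 10 → ℕ) : Prop :=
  m 1 + m 4 = m 6 + m 9 ∧ m 2 + m 3 = m 7 + m 8

instance : DecidablePred IsBalanced := fun _ => inferInstanceAs (Decidable (_ ∧ _))

theorem im_sum_xi_pow_eq_zero_iff (m : Fin 10 → ℕ) :
    (∑ j, (m j : ℂ) * xi ^ (j : ℕ)).im = 0 ↔ IsBalanced m := by
  rw [im_sum_xi_pow]
  constructor
  · intro h
    obtain ⟨h₁, h₂⟩ := eq_zero_of_intCast_mul_sin_pi_div_five_add
      (a := m 1 + m 4 - m 6 - m 9) (b := m 2 + m 3 - m 7 - m 8) (by exact_mod_cast h)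
    exact ⟨by omega, by omega⟩
  · rintro ⟨h₁, h₂⟩
    have h₁' : (m 1 : ℝ) + m 4 = m 6 + m 9 := by exact_mod_cast h₁
    have h₂' : (m 2 : ℝ) + m 3 = m 7 + m 8 := by exact_mod_cast h₂
    linear_combination sin (π / 5) * h₁' + sin (2 * π / 5) * h₂'

theorem exists_pos_of_add_eq_add {ι : Type*} [DecidableEq ι] {n : ι → ℕ} {i j k l : ι}
    (h : n i + n j = n k + n l) (hpos : 0 < n i + n j) :
    ∃ a ∈ ({i, j} : Finset ι), ∃ b ∈ ({k, l} : Finset ι), 0 < n a ∧ 0 < n b := by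
  have exists_pos : ∀ {x y : ι}, 0 < n x + n y → ∃ a ∈ ({x, y} : Finset ι), 0 < n a := by
    intro x y hxy
    by_contra! hzero
    simp only [mem_insert, mem_singleton, forall_eq_or_imp, forall_eq, Nat.le_zero] at hzero
    omega
  obtain ⟨a, ha, hna⟩ := exists_pos hpos
  obtain ⟨b, hb, hnb⟩ := exists_pos (h ▸ hpos)
  exact ⟨a, ha, b, hb, hna, hnb⟩

theorem exists_balanced_finset (n : Fin 10 → ℕ) (hpos : 0 < ∑ j, n j) (hn : IsBalanced n) :
    ∃ s : Finset (Fin 10), s.Nonempty ∧ #s ≤ 2 ∧ (∀ j ∈ s, 0 < n j) ∧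
      IsBalanced fun j => if j ∈ s then 1 else 0 := by
  have hsum : ∑ j, n j = n 0 + n 1 + n 2 + n 3 + n 4 + n 5 + n 6 + n 7 + n 8 + n 9 := by
    simp only [Fin.sum_univ_castSucc, Fin.sum_univ_zero, Fin.reduceCastSucc, Fin.reduceLast,
      zero_add]
  by_cases h0 : 0 < n 0
  · exact ⟨{0}, singleton_nonempty _, by simp, by simpa, by decide⟩
  by_cases h5 : 0 < n 5
  · exact ⟨{5}, singleton_nonempty _, by simp, by simpa, by decide⟩
  obtain ⟨a, b, hna, hnb, hab⟩ : ∃ a b, 0 < n a ∧ 0 < n b ∧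
      IsBalanced fun j => if j ∈ ({a, b} : Finset (Fin 10)) then 1 else 0 := by
    obtain h14 | h23 : 0 < n 1 + n 4 ∨ 0 < n 2 + n 3 := by unfold IsBalanced at hn; omega
    · obtain ⟨a, ha, b, hb, hna, hnb⟩ := exists_pos_of_add_eq_add hn.1 h14
      refine ⟨a, b, hna, hnb, ?_⟩
      fin_cases ha <;> fin_cases hb <;> decide
    · obtain ⟨a, ha, b, hb, hna, hnb⟩ := exists_pos_of_add_eq_add hn.2 h23
      refine ⟨a, b, hna, hnb, ?_⟩
      fin_cases ha <;> fin_cases hb <;> decide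
  exact ⟨{a, b}, insert_nonempty _ _, card_le_two, by simp [hna, hnb], hab⟩

/-- Theorem 6.6: every real combination of at least three 10th roots of unity is
reducible, i.e. admits a proper nonempty subcombination with real sum. -/
theorem no_nontrivial_combination (n : Fin 10 → ℕ)
    (hlevel : 3 ≤ ∑ j, n j)
    (hreal : (∑ j, (n j : ℂ) * xi ^ (j : ℕ)).im = 0) :
    ∃ m : Fin 10 → ℕ, (∀ j, m j ≤ n j) ∧ 0 < ∑ j, m j ∧ (∑ j, m j) < (∑ j, n j) ∧
      (∑ j, (m j : ℂ) * xi ^ (j : ℕ)).im = 0 := by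
  rw [im_sum_xi_pow_eq_zero_iff] at hreal
  obtain ⟨s, hne, hcard, hpos, hbal⟩ := exists_balanced_finset n (by omega) hreal
  have hsum : ∑ j, (if j ∈ s then 1 else 0) = #s := by simp
  refine ⟨fun j => if j ∈ s then 1 else 0, fun j => ?_, ?_, ?_, (im_sum_xi_pow_eq_zero_iff _).2 hbal⟩
  · dsimp only
    split_ifs with hj
    exacts [hpos j hj, Nat.zero_le _]
  · rw [hsum]; exact hne.card_pos
  · rw [hsum]; omega
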